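/- With F, g, Q_i, I = F^⊥ + S_{≥3} as above, and I' = F^⊥·S[ε] + (g − ε·Q_i)·S[ε] ⊆ S[ε] where S[ε] = S ⊗_k k[ε]/(ε²): for every j and k with k ≠ j, the product α_j·Q_k lies in F^⊥, and α_j·Q_j ≡ g (mod F^⊥); consequently in S[ε]/I' the multiplication-by-α_j operator has trace equal to δ_{ij}·ε with respect to the basis (1, α_1,...,α_6, Q_1,...,Q_6). -/

import Mathlib

/-!
Contracting with `X j` differentiates: `(X j * h) ∘ F = ∂_j (h ∘ F)`, because the partial
derivatives commute. Hence `(α_j Q_l) ∘ F = ∂_j x_l = δ_{jl}`, which gives the first two claims.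
In `S[ε]/I'` multiplication by `α_j` sends `1 ↦ α_j`, `α_l ↦ α_j α_l ≡ ∑_m c_m Q_m` (the
contraction `∂_j ∂_l F` of `α_j α_l` is linear since `F` is a cubic), `Q_l ↦ 0` for `l ≠ j`, and
`Q_j ↦ g ≡ ε Q_i`. So the only diagonal entry that can be nonzero is the `Q_j`-coordinate of
`ε Q_i`, namely `δ_{ij} ε`.
-/

open MvPolynomial

/-- Composition of powers of the operators `op i`, with multiplicities given by `m`. -/
noncomputable def opPow {k : Type*} [CommSemiring k] {σ : Type*}
    (op : σ → Module.End k (MvPolynomial σ k)) (m : σ →₀ ℕ) :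
    Module.End k (MvPolynomial σ k) :=
  m.support.toList.foldr (fun i L => (op i) ^ (m i) * L) 1

/-- The action of a "differential polynomial" `h` on `F`, each variable of `h` acting by the
operator `op i`. -/
noncomputable def apAct {k : Type*} [CommSemiring k] {σ : Type*}
    (op : σ → Module.End k (MvPolynomial σ k)) (h F : MvPolynomial σ k) : MvPolynomial σ k :=
  h.support.sum fun m => (h.coeff m) • (opPow op m F)

/-- Apolarity contraction `h ∘ F`: each variable of `h` acts as the corresponding partial
derivative. -/
noncomputable def apContract {k : Type*} [CommSemiring k] {σ : Type*} [DecidableEq σ]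
    (h F : MvPolynomial σ k) : MvPolynomial σ k :=
  apAct (fun i => (pderiv i).toLinearMap) h F

section OperatorAction

variable {k σ : Type*} [CommSemiring k] (op : σ → Module.End k (MvPolynomial σ k))

theorem opPow_zero : opPow op 0 = 1 := by
  simp [opPow]

theorem opPow_single_one (j : σ) : opPow op (Finsupp.single j 1) = op j := by
  simp [opPow]

variable {op} (hop : ∀ a b, Commute (op a) (op b))
include hop

theorem pairwise_commute_op_pow (s : Set σ) (m : σ →₀ ℕ) :
    s.Pairwise (Function.onFun Commute fun i => op i ^ m i) :=
  fun a _ b _ _ => (hop a b).pow_pow _ _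

theorem opPow_eq_noncommProd [DecidableEq σ] (m : σ →₀ ℕ) {s : Finset σ} (hs : m.support ⊆ s) :
    opPow op m = s.noncommProd (fun i => op i ^ m i) (pairwise_commute_op_pow hop _ m) := by
  have hcomm := pairwise_commute_op_pow hop (Set.univ : Set σ) m
  calc opPow op m
      = m.support.noncommProd (fun i => op i ^ m i) (hcomm.mono (Set.subset_univ _)) := by
        rw [opPow, ← List.foldr_map, ← List.prod_eq_foldr,
          ← Finset.noncommProd_toFinset _ _ (hcomm.mono (Set.subset_univ _))
            m.support.nodup_toList]
        exact Finset.noncommProd_congr (Finset.toList_toFinset _) (fun _ _ => rfl) _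
    _ = m.support.noncommProd (fun i => op i ^ m i) (hcomm.mono (Set.subset_univ _)) *
          (s \ m.support).noncommProd (fun i => op i ^ m i) (hcomm.mono (Set.subset_univ _)) := by
        rw [Finset.noncommProd_eq_pow_card (s \ m.support) _ _ 1, one_pow, mul_one]
        intro i hi
        rw [Finsupp.notMem_support_iff.mp (Finset.mem_sdiff.mp hi).2, pow_zero]
    _ = (m.support ∪ s \ m.support).noncommProd (fun i => op i ^ m i)
          (hcomm.mono (Set.subset_univ _)) :=
        (Finset.noncommProd_union_of_disjoint Finset.disjoint_sdiff _ _).symm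
    _ = s.noncommProd (fun i => op i ^ m i) (pairwise_commute_op_pow hop _ m) :=
        Finset.noncommProd_congr (Finset.union_sdiff_of_subset hs) (fun _ _ => rfl) _

theorem opPow_add (m n : σ →₀ ℕ) : opPow op (m + n) = opPow op m * opPow op n := by
  classical
  rw [opPow_eq_noncommProd hop _ (Finsupp.support_add (g₁ := m) (g₂ := n)),
    opPow_eq_noncommProd hop m Finset.subset_union_left,
    opPow_eq_noncommProd hop n Finset.subset_union_right,
    ← Finset.noncommProd_mul_distrib _ _ _ _ fun a _ b _ _ => (hop a b).pow_pow _ _]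
  simp only [Finsupp.add_apply, pow_add, Pi.mul_def]

end OperatorAction

section Action

variable {k σ : Type*} [CommSemiring k] (op : σ → Module.End k (MvPolynomial σ k))
  (F : MvPolynomial σ k)

noncomputable def apActₗ : MvPolynomial σ k →ₗ[k] MvPolynomial σ k :=
  (basisMonomials σ k).constr k fun m => opPow op m F

theorem apActₗ_apply (h : MvPolynomial σ k) : apActₗ op F h = apAct op h F := by
  rw [apActₗ, Module.Basis.constr_apply]
  rfl

theorem apAct_monomial (m : σ →₀ ℕ) (c : k) : apAct op (monomial m c) F = c • opPow op m F := by
  rw [← apActₗ_apply, show monomial m c = c • basisMonomials σ k m by simp [smul_monomial],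
    map_smul, apActₗ, Module.Basis.constr_basis]

theorem apAct_X_mul (hop : ∀ a b, Commute (op a) (op b)) (j : σ) (h : MvPolynomial σ k) :
    apAct op (X j * h) F = op j (apAct op h F) := by
  have hlin : apActₗ op F ∘ₗ LinearMap.mulLeft k (X j) = op j ∘ₗ apActₗ op F := by
    refine (basisMonomials σ k).ext fun m => ?_
    simp only [LinearMap.comp_apply, LinearMap.mulLeft_apply, coe_basisMonomials, apActₗ_apply,
      X, monomial_mul, one_mul, apAct_monomial, one_smul, opPow_add hop, opPow_single_one,
      Module.End.mul_apply]
  simpa only [LinearMap.comp_apply, LinearMap.mulLeft_apply, apActₗ_apply] using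
    LinearMap.congr_fun hlin h

end Action

theorem MvPolynomial.commute_pderiv {k σ : Type*} [CommRing k] (i j : σ) :
    Commute (pderiv i : Derivation k (MvPolynomial σ k) _).toLinearMap (pderiv j).toLinearMap := by
  classical
  rw [commute_iff_lie_eq, ← Derivation.commutator_coe_linear_map]
  suffices h : ⁅(pderiv i : Derivation k (MvPolynomial σ k) _), pderiv j⁆ = 0 by
    rw [h]; rfl
  refine derivation_ext fun m => ?_
  simp [Derivation.commutator_apply, pderiv_X, Pi.single_apply, apply_ite (pderiv _)]

-- Euler's identity in degree one.
theorem MvPolynomial.IsHomogeneous.eq_sum_smul_X {k σ : Type*} [CommSemiring k] [Fintype σ]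
    {φ : MvPolynomial σ k} (hφ : φ.IsHomogeneous 1) :
    φ = ∑ i, constantCoeff (pderiv i φ) • X i := by
  have hconst : ∀ i, pderiv i φ = C (constantCoeff (pderiv i φ)) := fun i =>
    totalDegree_eq_zero_iff_eq_C.mp ((totalDegree_zero_iff_isHomogeneous σ).mpr hφ.pderiv)
  conv_lhs => rw [← one_smul ℕ φ, ← hφ.sum_X_mul_pderiv]
  refine Finset.sum_congr rfl fun i _ => ?_
  rw [hconst i, constantCoeff_C, mul_comm, C_mul']

section Apolarity

variable {k σ : Type*} [CommRing k] [DecidableEq σ] (F : MvPolynomial σ k)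

theorem apContract_eq_apActₗ (h : MvPolynomial σ k) :
    apContract h F = apActₗ (fun i => (pderiv i).toLinearMap) F h :=
  (apActₗ_apply _ F h).symm

theorem apContract_sub (a c : MvPolynomial σ k) :
    apContract (a - c) F = apContract a F - apContract c F := by
  simp only [apContract_eq_apActₗ, map_sub]

theorem apContract_sum_smul {ι : Type*} (s : Finset ι) (c : ι → k) (h : ι → MvPolynomial σ k) :
    apContract (∑ m ∈ s, c m • h m) F = ∑ m ∈ s, c m • apContract (h m) F := by
  simp only [apContract_eq_apActₗ, map_sum, map_smul]

theorem apContract_one : apContract 1 F = F := by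
  rw [apContract, ← C_1, ← monomial_zero', apAct_monomial, opPow_zero, one_smul,
    Module.End.one_apply]

theorem apContract_X_mul (j : σ) (h : MvPolynomial σ k) :
    apContract (X j * h) F = pderiv j (apContract h F) :=
  apAct_X_mul _ F commute_pderiv j h

theorem apContract_X (j : σ) : apContract (X j) F = pderiv j F := by
  rw [← mul_one (X j), apContract_X_mul, apContract_one]

variable {F}

theorem apContract_X_mul_eq_zero_of_ne {q : MvPolynomial σ k} {l : σ} (hq : apContract q F = X l)
    {j : σ} (hlj : l ≠ j) : apContract (X j * q) F = 0 := by
  rw [apContract_X_mul, hq, pderiv_X_of_ne hlj]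

theorem apContract_X_mul_sub_eq_zero {g q : MvPolynomial σ k} {j : σ} (hg : apContract g F = 1)
    (hq : apContract q F = X j) : apContract (X j * q - g) F = 0 := by
  rw [apContract_sub, apContract_X_mul, hq, pderiv_X_self, hg, sub_self]

theorem exists_apContract_X_mul_X_sub_sum_eq_zero [Fintype σ] (hF : F.IsHomogeneous 3)
    {Q : σ → MvPolynomial σ k} (hQ : ∀ m, apContract (Q m) F = X m) (j l : σ) :
    ∃ c : σ → k, apContract (X j * X l - ∑ m, c m • Q m) F = 0 := by
  have hlin : (pderiv j (pderiv l F)).IsHomogeneous 1 := hF.pderiv.pderiv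
  refine ⟨fun m => constantCoeff (pderiv m (pderiv j (pderiv l F))), ?_⟩
  rw [apContract_sub, apContract_X_mul, apContract_X, apContract_sum_smul]
  simp only [hQ]
  exact sub_eq_zero.mpr hlin.eq_sum_smul_X

end Apolarity

section DeformedQuotient

variable {k σ Dk : Type*} [CommRing k] [DecidableEq σ] [CommRing Dk] [Algebra k Dk]

noncomputable def deformedApolarIdeal (F g q : MvPolynomial σ k) (ε : Dk) :
    Ideal (MvPolynomial σ Dk) :=
  Ideal.span (map (algebraMap k Dk) '' {h | apContract h F = 0} ∪
    {map (algebraMap k Dk) g - C ε * map (algebraMap k Dk) q})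

noncomputable def deformedApolarMap (F g q : MvPolynomial σ k) (ε : Dk) :
    MvPolynomial σ k →ₐ[k] MvPolynomial σ Dk ⧸ deformedApolarIdeal F g q ε :=
  (Ideal.Quotient.mkₐ k _).comp (mapAlgHom (Algebra.ofId k Dk))

variable {F g q : MvPolynomial σ k} {ε : Dk}

theorem deformedApolarMap_apply (p : MvPolynomial σ k) :
    deformedApolarMap F g q ε p = Ideal.Quotient.mk _ (map (algebraMap k Dk) p) :=
  rfl

theorem deformedApolarMap_eq_of_apContract_sub_eq_zero {a c : MvPolynomial σ k}
    (h : apContract (a - c) F = 0) : deformedApolarMap F g q ε a = deformedApolarMap F g q ε c := by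
  rw [deformedApolarMap_apply, deformedApolarMap_apply, Ideal.Quotient.eq, ← map_sub]
  exact Ideal.subset_span (Or.inl ⟨_, h, rfl⟩)

theorem deformedApolarMap_eq_zero_of_apContract_eq_zero {a : MvPolynomial σ k}
    (h : apContract a F = 0) : deformedApolarMap F g q ε a = 0 := by
  rw [deformedApolarMap_eq_of_apContract_sub_eq_zero (c := 0) (by rwa [sub_zero]), map_zero]

theorem deformedApolarMap_eq_smul :
    deformedApolarMap F g q ε g = ε • deformedApolarMap F g q ε q := by
  rw [deformedApolarMap_apply, deformedApolarMap_apply, ← Ideal.Quotient.mkₐ_eq_mk Dk, ← map_smul,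
    smul_eq_C_mul, Ideal.Quotient.mkₐ_eq_mk, Ideal.Quotient.eq]
  exact Ideal.subset_span (Or.inr rfl)

theorem exists_deformedApolarMap_X_mul_X_eq_sum [Fintype σ] (hF : F.IsHomogeneous 3)
    {Q : σ → MvPolynomial σ k} (hQ : ∀ m, apContract (Q m) F = X m) (j l : σ) :
    ∃ c : σ → k,
      deformedApolarMap F g q ε (X j * X l) = ∑ m, c m • deformedApolarMap F g q ε (Q m) := by
  obtain ⟨c, hc⟩ := exists_apContract_X_mul_X_sub_sum_eq_zero hF hQ j l
  refine ⟨c, ?_⟩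
  rw [deformedApolarMap_eq_of_apContract_sub_eq_zero hc, map_sum]
  simp only [map_smul]

theorem trace_toMatrix_mulLeft_deformedApolarMap_X [Fintype σ] {Q : σ → MvPolynomial σ k}
    (hF : F.IsHomogeneous 3) (hg : apContract g F = 1) (hQ : ∀ m, apContract (Q m) F = X m)
    (i j : σ) (b : Module.Basis (Unit ⊕ σ ⊕ σ) Dk
      (MvPolynomial σ Dk ⧸ deformedApolarIdeal F g (Q i) ε))
    (hb_one : b (.inl ()) = 1)
    (hb_X : ∀ l, b (.inr (.inl l)) = deformedApolarMap F g (Q i) ε (X l))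
    (hb_Q : ∀ l, b (.inr (.inr l)) = deformedApolarMap F g (Q i) ε (Q l)) :
    Matrix.trace (LinearMap.toMatrix b b
      (LinearMap.mulLeft Dk (deformedApolarMap F g (Q i) ε (X j)))) = if j = i then ε else 0 := by
  set φ := deformedApolarMap F g (Q i) ε
  have hdiag_one : b.repr (φ (X j) * b (.inl ())) (.inl ()) = 0 := by
    simp [hb_one, ← hb_X]
  have hdiag_X : ∀ l, b.repr (φ (X j) * b (.inr (.inl l))) (.inr (.inl l)) = 0 := fun l => by
    obtain ⟨c, hc⟩ := exists_deformedApolarMap_X_mul_X_eq_sum (g := g) (q := Q i) (ε := ε) hF hQ j l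
    rw [hb_X, ← map_mul, hc, map_sum, Finsupp.finsetSum_apply]
    refine Finset.sum_eq_zero fun m _ => ?_
    rw [← algebraMap_smul Dk, ← hb_Q, map_smul, b.repr_self]
    simp
  have hmul_Q : ∀ l, l ≠ j → φ (X j) * b (.inr (.inr l)) = 0 := fun l hlj => by
    rw [hb_Q, ← map_mul,
      deformedApolarMap_eq_zero_of_apContract_eq_zero (apContract_X_mul_eq_zero_of_ne (hQ l) hlj)]
  have hmul_Q_self : φ (X j) * b (.inr (.inr j)) = ε • b (.inr (.inr i)) := by
    rw [hb_Q, hb_Q, ← map_mul,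
      deformedApolarMap_eq_of_apContract_sub_eq_zero (apContract_X_mul_sub_eq_zero hg (hQ j)),
      deformedApolarMap_eq_smul]
  have hdiag_Q : ∑ l, b.repr (φ (X j) * b (.inr (.inr l))) (.inr (.inr l))
      = if j = i then ε else 0 := by
    rw [Finset.sum_eq_single_of_mem j (Finset.mem_univ j) fun l _ hlj => by
      rw [hmul_Q l hlj, map_zero, Finsupp.zero_apply]]
    simp [hmul_Q_self, Finsupp.single_apply, eq_comm]
  simp only [Matrix.trace, Matrix.diag, LinearMap.toMatrix_apply, LinearMap.mulLeft_apply,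
    Fintype.sum_sum_type, hdiag_one, hdiag_X, hdiag_Q, Finset.sum_const_zero, zero_add]

end DeformedQuotient

theorem trace_of_multiplication_by_alpha_general {k : Type*} [Field k]
    (F : MvPolynomial (Fin 6) k) (hF : F.IsHomogeneous 3)
    (g : MvPolynomial (Fin 6) k) (hg : apContract g F = 1)
    (Q : Fin 6 → MvPolynomial (Fin 6) k)
    (hQ : ∀ i, apContract (Q i) F = X i)
    (Dk : Type*) [CommRing Dk] [Algebra k Dk] (ε : Dk)
    (ι : MvPolynomial (Fin 6) k →+* MvPolynomial (Fin 6) Dk)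
    (hι : ι = MvPolynomial.map (algebraMap k Dk))
    (I' : Fin 6 → Ideal (MvPolynomial (Fin 6) Dk))
    (hI' : ∀ i, I' i = Ideal.span
      (ι '' {h : MvPolynomial (Fin 6) k | apContract h F = 0} ∪ {ι g - C ε * ι (Q i)})) :
    (∀ j l : Fin 6, l ≠ j → apContract (X j * Q l) F = 0)
    ∧ (∀ j : Fin 6, apContract (X j * Q j - g) F = 0)
    ∧ ∀ (i j : Fin 6)
        (b : Module.Basis (Unit ⊕ Fin 6 ⊕ Fin 6) Dk (MvPolynomial (Fin 6) Dk ⧸ I' i)),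
        (∀ u, b u = Sum.elim (fun _ => Ideal.Quotient.mk (I' i) 1)
          (Sum.elim (fun l => Ideal.Quotient.mk (I' i) (ι (X l)))
            (fun l => Ideal.Quotient.mk (I' i) (ι (Q l)))) u) →
        Matrix.trace (LinearMap.toMatrix b b
          (LinearMap.mulLeft Dk (Ideal.Quotient.mk (I' i) (ι (X j)))))
          = if j = i then ε else 0 := by
  refine ⟨fun j l hlj => apContract_X_mul_eq_zero_of_ne (hQ l) hlj,
    fun j => apContract_X_mul_sub_eq_zero hg (hQ j), ?_⟩
  subst hι
  obtain rfl : I' = fun i => deformedApolarIdeal F g (Q i) ε := funext hI'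
  intro i j b hb
  exact trace_toMatrix_mulLeft_deformedApolarMap_X hF hg hQ i j b ((hb _).trans (map_one _))
    (fun _ => hb _) (fun _ => hb _)

/-- With `F, g, Q_i` as before, `k[ε] = k ⊕ kε` the dual numbers (a commutative `k`-algebra
with basis `(1, ε)` and `ε² = 0`), `S[ε] = MvPolynomial (Fin 6) k[ε]`, and
`I' = F^⊥·S[ε] + (g − ε·Q_i)·S[ε]`: for all `l ≠ j` the product `α_j·Q_l` lies in `F^⊥`,
and `α_j·Q_j ≡ g (mod F^⊥)`; consequently in `S[ε]/I'` the multiplication-by-`α_j` operator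
has trace `δ_{ij}·ε` with respect to the basis `(1, α_1,…,α_6, Q_1,…,Q_6)`. -/
theorem trace_of_multiplication_by_alpha {k : Type*} [Field k] [CharZero k]
    (F : MvPolynomial (Fin 6) k) (hF : F.IsHomogeneous 3)
    (g : MvPolynomial (Fin 6) k) (hg : apContract g F = 1)
    (Q : Fin 6 → MvPolynomial (Fin 6) k) (hQhom : ∀ i, (Q i).IsHomogeneous 2)
    (hQ : ∀ i, apContract (Q i) F = X i)
    (Dk : Type*) [CommRing Dk] [Algebra k Dk] (ε : Dk) (hε2 : ε ^ 2 = 0)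
    (hDk : ∃ bD : Module.Basis (Fin 2) k Dk, bD 0 = 1 ∧ bD 1 = ε)
    (ι : MvPolynomial (Fin 6) k →+* MvPolynomial (Fin 6) Dk)
    (hι : ι = MvPolynomial.map (algebraMap k Dk))
    (I' : Fin 6 → Ideal (MvPolynomial (Fin 6) Dk))
    (hI' : ∀ i, I' i = Ideal.span
      (ι '' {h : MvPolynomial (Fin 6) k | apContract h F = 0} ∪ {ι g - C ε * ι (Q i)})) :
    (∀ j l : Fin 6, l ≠ j → apContract (X j * Q l) F = 0)
    ∧ (∀ j : Fin 6, apContract (X j * Q j - g) F = 0)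
    ∧ ∀ (i j : Fin 6)
        (b : Module.Basis (Unit ⊕ Fin 6 ⊕ Fin 6) Dk (MvPolynomial (Fin 6) Dk ⧸ I' i)),
        (∀ u, b u = Sum.elim (fun _ => Ideal.Quotient.mk (I' i) 1)
          (Sum.elim (fun l => Ideal.Quotient.mk (I' i) (ι (X l)))
            (fun l => Ideal.Quotient.mk (I' i) (ι (Q l)))) u) →
        Matrix.trace (LinearMap.toMatrix b b
          (LinearMap.mulLeft Dk (Ideal.Quotient.mk (I' i) (ι (X j)))))
          = if j = i then ε else 0 :=
  trace_of_multiplication_by_alpha_general F hF g hg Q hQ Dk ε ι hι I' hI'
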